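/- Let x₁, ..., x_N ∈ ℝ² be non-collinear with consecutive points distinct, y* ∈ ℝ², dᵢ = ‖y* - xᵢ‖, eᵢ = x_{i+1} - xᵢ, aᵢ = (‖eᵢ‖² + dᵢ² - d_{i+1}²)/(2‖eᵢ‖), yᵢ = xᵢ + aᵢ eᵢ/‖eᵢ‖, and J(y) = (1/2) Σ_{i=1}^{N-1} (⟨y - yᵢ, eᵢ⟩)². Then J(y) = 0 if and only if y = y*. -/

import Mathlib

open RealInnerProductSpace

/-!
The true source `y*` lies on the radical axis of every pair of consecutive circles
`‖y - xᵢ‖ = dᵢ`, `‖y - x_{i+1}‖ = d_{i+1}`, and `yᵢ` is the foot of that axis on the line `xᵢx_{i+1}`.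
Hence `J y = ½ ∑ ⟪y - y*, eᵢ⟫²`, which vanishes iff `y - y*` is orthogonal to every `eᵢ`,
i.e. to every `xᵢ - x₀`. In the plane a nonzero such vector would put all sensors on one line.
-/

variable {E : Type*} [NormedAddCommGroup E] [InnerProductSpace ℝ E]

/-- The point where the radical axis of the circles centred at `x₀`, `x₁` with radii `r₀`, `r₁`
meets the line `x₀x₁`. -/
noncomputable def radicalAxisFoot (x₀ x₁ : E) (r₀ r₁ : ℝ) : E :=
  x₀ + ((‖x₁ - x₀‖ ^ 2 + r₀ ^ 2 - r₁ ^ 2) / (2 * ‖x₁ - x₀‖) / ‖x₁ - x₀‖) • (x₁ - x₀)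

theorem inner_sub_radicalAxisFoot_eq_zero {x₀ x₁ : E} (h : x₀ ≠ x₁) (p : E) :
    ⟪p - radicalAxisFoot x₀ x₁ ‖p - x₀‖ ‖p - x₁‖, x₁ - x₀⟫ = 0 := by
  have hne : ‖x₁ - x₀‖ ≠ 0 := norm_ne_zero_iff.2 (sub_ne_zero.2 h.symm)
  have hpol := real_inner_eq_norm_mul_self_add_norm_mul_self_sub_norm_sub_mul_self_div_two
    (p - x₀) (x₁ - x₀)
  rw [sub_sub_sub_cancel_right] at hpol
  rw [radicalAxisFoot, ← sub_sub, inner_sub_left, real_inner_smul_left,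
    real_inner_self_eq_norm_sq, hpol]
  field_simp
  ring

theorem collinear_of_forall_inner_eq [FiniteDimensional ℝ E] (hE : Module.finrank ℝ E = 2)
    {s : Set E} {v : E} (hv : v ≠ 0) {c : ℝ} (h : ∀ p ∈ s, ⟪v, p⟫ = c) : Collinear ℝ s := by
  have : Fact (Module.finrank ℝ E = 1 + 1) := ⟨hE⟩
  have hspan : vectorSpan ℝ s ≤ (ℝ ∙ v)ᗮ := by
    rw [vectorSpan_def, Submodule.span_le]
    rintro _ ⟨p, hp, q, hq, rfl⟩
    rw [SetLike.mem_coe, Submodule.mem_orthogonal_singleton_iff_inner_right]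
    change ⟪v, p - q⟫ = 0
    rw [inner_sub_right, h p hp, h q hq, sub_self]
  rw [collinear_iff_finrank_le_one]
  exact (Submodule.finrank_mono hspan).trans_eq (Submodule.finrank_orthogonal_span_singleton hv)

theorem apply_eq_apply_zero_of_forall_succ {α : Type*} {f : ℕ → α} {N : ℕ}
    (h : ∀ i, i + 1 < N → f (i + 1) = f i) : ∀ i, i < N → f i = f 0
  | 0, _ => rfl
  | i + 1, hi => (h i hi).trans (apply_eq_apply_zero_of_forall_succ h i (by omega))

theorem cost_eq_zero_iff_general (N : ℕ)
    (x : ℕ → EuclideanSpace ℝ (Fin 2))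
    (hnc : ¬ Collinear ℝ (x '' Set.Iio N))
    (hcons : ∀ i, i + 1 < N → x i ≠ x (i + 1))
    (ystar : EuclideanSpace ℝ (Fin 2)) (d : ℕ → ℝ)
    (hd : ∀ i, i < N → d i = ‖ystar - x i‖)
    (e : ℕ → EuclideanSpace ℝ (Fin 2)) (he : ∀ i, e i = x (i + 1) - x i)
    (a : ℕ → ℝ) (ha : ∀ i, a i = (‖e i‖ ^ 2 + (d i) ^ 2 - (d (i + 1)) ^ 2) / (2 * ‖e i‖))
    (Y : ℕ → EuclideanSpace ℝ (Fin 2)) (hY : ∀ i, Y i = x i + (a i / ‖e i‖) • e i)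
    (J : EuclideanSpace ℝ (Fin 2) → ℝ)
    (hJ : ∀ y, J y = (1 / 2 : ℝ) * ∑ i ∈ Finset.range (N - 1), ⟪y - Y i, e i⟫ ^ 2) :
    ∀ y, J y = 0 ↔ y = ystar := by
  have hstar : ∀ i ∈ Finset.range (N - 1), ⟪ystar - Y i, e i⟫ = 0 := by
    intro i hmem
    have hi : i + 1 < N := by have := Finset.mem_range.1 hmem; omega
    rw [hY, ha, he, hd i (by omega), hd (i + 1) hi]
    exact inner_sub_radicalAxisFoot_eq_zero (hcons i hi) ystar
  intro y
  have hJy : J y = (1 / 2 : ℝ) * ∑ i ∈ Finset.range (N - 1), ⟪y - ystar, e i⟫ ^ 2 := by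
    rw [hJ]
    congr 1
    refine Finset.sum_congr rfl fun i hi => ?_
    rw [← sub_add_sub_cancel y ystar, inner_add_left, hstar i hi, add_zero]
  rw [hJy, mul_eq_zero, or_iff_right (by norm_num),
    Finset.sum_eq_zero_iff_of_nonneg fun _ _ => sq_nonneg _]
  simp only [sq_eq_zero_iff]
  refine ⟨fun hperp => ?_, by rintro rfl i _; simp⟩
  by_contra hne
  refine hnc (collinear_of_forall_inner_eq finrank_euclideanSpace_fin (sub_ne_zero.2 hne)
    (c := ⟪y - ystar, x 0⟫) ?_)
  rintro _ ⟨i, hi, rfl⟩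
  refine apply_eq_apply_zero_of_forall_succ (f := fun j => ⟪y - ystar, x j⟫)
    (fun j hj => ?_) i hi
  rw [← sub_eq_zero, ← inner_sub_right, ← he]
  exact hperp j (Finset.mem_range.2 (by omega))

/-- For non-collinear sensors with consecutive positions distinct and noise-free measurements,
the radical-axis cost `J` vanishes exactly at the true source position `y*`. -/
theorem cost_eq_zero_iff (N : ℕ) (hN : 3 ≤ N)
    (x : ℕ → EuclideanSpace ℝ (Fin 2))
    (hnc : ¬ Collinear ℝ (x '' Set.Iio N))
    (hcons : ∀ i, i + 1 < N → x i ≠ x (i + 1))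
    (ystar : EuclideanSpace ℝ (Fin 2)) (d : ℕ → ℝ)
    (hd : ∀ i, i < N → d i = ‖ystar - x i‖)
    (e : ℕ → EuclideanSpace ℝ (Fin 2)) (he : ∀ i, e i = x (i + 1) - x i)
    (a : ℕ → ℝ) (ha : ∀ i, a i = (‖e i‖ ^ 2 + (d i) ^ 2 - (d (i + 1)) ^ 2) / (2 * ‖e i‖))
    (Y : ℕ → EuclideanSpace ℝ (Fin 2)) (hY : ∀ i, Y i = x i + (a i / ‖e i‖) • e i)
    (J : EuclideanSpace ℝ (Fin 2) → ℝ)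
    (hJ : ∀ y, J y = (1 / 2 : ℝ) * ∑ i ∈ Finset.range (N - 1), ⟪y - Y i, e i⟫ ^ 2) :
    ∀ y, J y = 0 ↔ y = ystar :=
  cost_eq_zero_iff_general N x hnc hcons ystar d hd e he a ha Y hY J hJ
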